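/- For Re(α) > 0, Re(β₁) > 0 and small x, y, z, H_A(α, β₁, β₂; γ₁, γ₂; x, y, z) = [1/(Γ(α)Γ(β₁))] ∫₀^∞∫₀^∞ e^{-u₁-u₂} u₁^{α-1} u₂^{β₁-1} ₀F₁(γ₁; x u₁ u₂) ₁F₁(β₂; γ₂; y u₂ + z u₁) du₁ du₂. -/

import Mathlib

open Complex MeasureTheory

/-! Expanding `₀F₁(γ₁; x u₁ u₂) ₁F₁(β₂; γ₂; y u₂ + z u₁)` as a Cauchy product, with
`(y u₂ + z u₁)^k` expanded binomially, gives a triple series in `(m, n, p)` whose term carries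
`u₁^(m+p) u₂^(m+n)`. Integrating termwise against `e^(-u₁-u₂) u₁^(α-1) u₂^(β₁-1)` produces
`Γ(α+m+p) Γ(β₁+m+n) = (α)_(m+p) (β₁)_(m+n) Γ(α) Γ(β₁)`, i.e. the series of `H_A`.
Both interchanges of sum and integral are justified by absolute convergence:
`|(β)_k / (γ)_k| ≤ K 2^k`, `Γ(a+k) ≤ K 2^k k!` and `(m+n)! ≤ 2^(m+n) m! n!` reduce all majorants
to exponential and geometric series, convergent once `|x| < 1/32` and `|y|, |z| < 1/8`. -/

/-- Pochhammer symbol `(x)_k`. -/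
noncomputable def poch (x : ℂ) (k : ℕ) : ℂ := (ascPochhammer ℂ k).eval x

/-- Srivastava's triple hypergeometric function `H_A`. -/
noncomputable def srivastavaHA (α β₁ β₂ γ₁ γ₂ : ℂ) (x y z : ℝ) : ℂ :=
  ∑' m : ℕ, ∑' n : ℕ, ∑' p : ℕ,
    poch α (m + p) * poch β₁ (m + n) * poch β₂ (n + p) *
      (x : ℂ) ^ m * (y : ℂ) ^ n * (z : ℂ) ^ p /
      (poch γ₁ m * poch γ₂ (n + p) *
        (Nat.factorial m : ℂ) * (Nat.factorial n : ℂ) * (Nat.factorial p : ℂ))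

/-- The confluent hypergeometric limit function `₀F₁(c; t)`. -/
noncomputable def hyp0F1 (c : ℂ) (t : ℝ) : ℂ :=
  ∑' k : ℕ, (t : ℂ) ^ k / (poch c k * (Nat.factorial k : ℂ))

/-- Kummer's confluent hypergeometric function `₁F₁(a;c;t)`. -/
noncomputable def hyp1F1 (a c : ℂ) (t : ℝ) : ℂ :=
  ∑' k : ℕ, poch a k * (t : ℂ) ^ k / (poch c k * (Nat.factorial k : ℂ))

lemma poch_succ (x : ℂ) (k : ℕ) : poch x (k + 1) = poch x k * (x + k) := by
  simpa [poch] using ascPochhammer_succ_eval k x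

lemma poch_one (k : ℕ) : poch 1 k = k.factorial := by
  simp [poch]

lemma exists_le_mul_pow_of_le_mul {f : ℕ → ℝ} {r : ℝ} (hr : 0 < r) {J : ℕ}
    (h : ∀ k, J ≤ k → f (k + 1) ≤ r * f k) : ∃ K ≥ 0, ∀ k, f k ≤ K * r ^ k := by
  set K := ∑ j ∈ Finset.range (J + 1), |f j| / r ^ j
  have initial : ∀ j ≤ J, f j ≤ K * r ^ j := fun j hj => by
    have hj' : |f j| / r ^ j ≤ K :=
      Finset.single_le_sum (f := fun i => |f i| / r ^ i) (fun i _ => by positivity)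
        (Finset.mem_range.2 (Nat.lt_succ_of_le hj))
    calc f j ≤ |f j| / r ^ j * r ^ j := by
          rw [div_mul_cancel₀ _ (by positivity)]; exact le_abs_self _
      _ ≤ K * r ^ j := by gcongr
  refine ⟨K, Finset.sum_nonneg fun j _ => by positivity, fun k => ?_⟩
  induction k with
  | zero => exact initial 0 (Nat.zero_le J)
  | succ k ih =>
    rcases le_or_gt J k with hk | hk
    · calc f (k + 1) ≤ r * f k := h k hk
        _ ≤ r * (K * r ^ k) := by gcongr
        _ = K * r ^ (k + 1) := by ring
    · exact initial (k + 1) hk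

/-- Where `(γ)_k = 0` the quotient is the junk value `0`, as in the series defining `H_A`,
`₀F₁` and `₁F₁`. -/
lemma exists_norm_poch_div_le (β γ : ℂ) :
    ∃ K ≥ 0, ∀ k, ‖poch β k / poch γ k‖ ≤ K * 2 ^ k := by
  obtain ⟨J, hJ⟩ := exists_nat_ge (‖β‖ + 2 * ‖γ‖)
  refine exists_le_mul_pow_of_le_mul two_pos (J := J) fun k hk => ?_
  have hfactor : ‖(β + k) / (γ + k)‖ ≤ 2 := by
    rcases eq_or_ne (γ + k) 0 with h | h
    · simp [h]
    rw [norm_div, div_le_iff₀ (norm_pos_iff.2 h)]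
    have hJk : (J : ℝ) ≤ k := by exact_mod_cast hk
    have hβk : ‖β + k‖ ≤ ‖β‖ + k := by simpa using norm_add_le β k
    have hγk : (k : ℝ) ≤ ‖γ + k‖ + ‖γ‖ := by simpa using norm_sub_le (γ + k) γ
    linarith
  rw [poch_succ, poch_succ, mul_div_mul_comm, norm_mul]
  nlinarith [norm_nonneg (poch β k / poch γ k)]

lemma exists_norm_inv_poch_le (c : ℂ) :
    ∃ K ≥ 0, ∀ k, ‖(poch c k)⁻¹‖ ≤ K * 2 ^ k / k.factorial := by
  obtain ⟨K, hK0, hK⟩ := exists_norm_poch_div_le 1 c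
  refine ⟨K, hK0, fun k => ?_⟩
  rw [le_div_iff₀ (by positivity)]
  simpa [poch_one, div_eq_mul_inv, mul_comm] using hK k

lemma exists_norm_poch_le (a : ℂ) : ∃ K ≥ 0, ∀ k, ‖poch a k‖ ≤ K * 2 ^ k * k.factorial := by
  obtain ⟨K, hK0, hK⟩ := exists_norm_poch_div_le a 1
  refine ⟨K, hK0, fun k => ?_⟩
  have hk := hK k
  rwa [poch_one, norm_div, norm_natCast, div_le_iff₀ (by positivity)] at hk

lemma ne_neg_natCast_of_re_pos {s : ℂ} (hs : 0 < s.re) (m : ℕ) : s ≠ -m := by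
  rintro rfl
  simp only [neg_re, natCast_re] at hs
  linarith [(m.cast_nonneg : (0 : ℝ) ≤ m)]

lemma Gamma_add_nat_eq_poch_mul {s : ℂ} (hs : ∀ m : ℕ, s ≠ -m) (k : ℕ) :
    Gamma (s + k) = poch s k * Gamma s := by
  rw [poch, ← Gamma_add_nat_div_Gamma_eq s hs, div_mul_cancel₀ _ (Gamma_ne_zero hs)]

lemma exists_Real_Gamma_add_nat_le {a : ℝ} (ha : 0 < a) :
    ∃ K ≥ 0, ∀ k : ℕ, Real.Gamma (a + k) ≤ K * 2 ^ k * k.factorial := by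
  obtain ⟨K, hK0, hK⟩ := exists_norm_poch_le a
  refine ⟨K * ‖Gamma a‖, by positivity, fun k => ?_⟩
  have hreal : Real.Gamma (a + k) = ‖Gamma ((a : ℂ) + k)‖ := by
    rw [← ofReal_natCast, ← ofReal_add, Gamma_ofReal, norm_real, Real.norm_of_nonneg
      (Real.Gamma_pos_of_pos (by positivity)).le]
  rw [hreal, Gamma_add_nat_eq_poch_mul (ne_neg_natCast_of_re_pos (by simpa using ha)), norm_mul]
  calc ‖poch a k‖ * ‖Gamma a‖ ≤ K * 2 ^ k * k.factorial * ‖Gamma a‖ := by gcongr; exact hK k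
    _ = K * ‖Gamma a‖ * 2 ^ k * k.factorial := by ring

noncomputable def gammaIntegrand (s : ℂ) (u : ℝ) : ℂ := (Real.exp (-u) : ℂ) * (u : ℂ) ^ (s - 1)

section gammaIntegrand

variable {s : ℂ}

lemma integral_gammaIntegrand (hs : 0 < s.re) :
    ∫ u in Set.Ioi (0 : ℝ), gammaIntegrand s u = Gamma s :=
  (Gamma_eq_integral hs).symm

lemma integrableOn_gammaIntegrand (hs : 0 < s.re) :
    IntegrableOn (gammaIntegrand s) (Set.Ioi 0) :=
  GammaIntegral_convergent hs

lemma norm_gammaIntegrand {u : ℝ} (hu : 0 < u) :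
    ‖gammaIntegrand s u‖ = Real.exp (-u) * u ^ (s.re - 1) := by
  rw [gammaIntegrand, norm_mul, norm_real, Real.norm_of_nonneg (Real.exp_pos _).le,
    norm_cpow_eq_rpow_re_of_pos hu]
  simp

lemma integral_norm_gammaIntegrand (hs : 0 < s.re) :
    ∫ u in Set.Ioi (0 : ℝ), ‖gammaIntegrand s u‖ = Real.Gamma s.re := by
  rw [Real.Gamma_eq_integral hs]
  exact setIntegral_congr_fun measurableSet_Ioi fun u hu => norm_gammaIntegrand hu

lemma norm_Gamma_le_Real_Gamma_re (hs : 0 < s.re) : ‖Gamma s‖ ≤ Real.Gamma s.re := by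
  rw [← integral_gammaIntegrand hs, ← integral_norm_gammaIntegrand hs]
  exact norm_integral_le_integral_norm _

lemma add_natCast_re_pos (hs : 0 < s.re) (k : ℕ) : 0 < (s + k).re := by
  simpa only [add_re, natCast_re] using add_pos_of_pos_of_nonneg hs k.cast_nonneg

lemma norm_Gamma_add_nat_le (hs : 0 < s.re) (k : ℕ) : ‖Gamma (s + k)‖ ≤ Real.Gamma (s.re + k) := by
  simpa only [add_re, natCast_re] using norm_Gamma_le_Real_Gamma_re (add_natCast_re_pos hs k)

lemma gammaIntegrand_add_nat {u : ℝ} (hu : 0 < u) (k : ℕ) :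
    gammaIntegrand (s + k) u = gammaIntegrand s u * (u : ℂ) ^ k := by
  rw [gammaIntegrand, gammaIntegrand, mul_assoc, ← cpow_natCast,
    ← cpow_add _ _ (by exact_mod_cast hu.ne'), add_sub_right_comm]

end gammaIntegrand

theorem integral_tsum_mul_gammaIntegrand {ι : Type*} [Countable ι] {c s : ι → ℂ}
    (hs : ∀ i, 0 < (s i).re) (hsum : Summable fun i => ‖c i‖ * Real.Gamma (s i).re) :
    ∫ u in Set.Ioi (0 : ℝ), ∑' i, c i * gammaIntegrand (s i) u = ∑' i, c i * Gamma (s i) := by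
  rw [← integral_tsum_of_summable_integral_norm
    (fun i => (integrableOn_gammaIntegrand (hs i)).const_mul (c i))]
  · simp only [integral_const_mul, integral_gammaIntegrand (hs _)]
  · simpa only [norm_mul, integral_const_mul, integral_norm_gammaIntegrand (hs _)] using hsum

lemma tsum_prod_eq_tsum_sum_antidiagonal {F : ℕ × ℕ → ℂ} (h : Summable F) :
    ∑' q, F q = ∑' n, ∑ q ∈ Finset.HasAntidiagonal.antidiagonal n, F q := by
  conv_rhs => congr; ext; rw [← Finset.sum_finset_coe, ← tsum_fintype (L := .unconditional _)]
  rw [← Finset.HasAntidiagonal.sigmaAntidiagonalEquivProd.tsum_eq F]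
  exact (Finset.HasAntidiagonal.sigmaAntidiagonalEquivProd.summable_iff.mpr h).tsum_sigma

section ExponentialType

variable {f : ℕ → ℂ} {K r : ℝ}

lemma summable_norm_mul_pow_div_factorial_mul (hf : ∀ k, ‖f k‖ ≤ K * r ^ k) (t₁ t₂ : ℂ) :
    Summable fun q : ℕ × ℕ =>
      ‖f (q.1 + q.2) * (t₁ ^ q.1 / q.1.factorial) * (t₂ ^ q.2 / q.2.factorial)‖ := by
  have hf' (k : ℕ) : ‖f k‖ ≤ |K| * |r| ^ k :=
    (hf k).trans (by rw [← abs_pow, ← abs_mul]; exact le_abs_self _)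
  have hmajorant : Summable fun q : ℕ × ℕ => |K| *
      ((|r| * ‖t₁‖) ^ q.1 / q.1.factorial * ((|r| * ‖t₂‖) ^ q.2 / q.2.factorial)) :=
    ((Real.summable_pow_div_factorial _).mul_of_nonneg (Real.summable_pow_div_factorial _)
      (fun _ => by positivity) (fun _ => by positivity)).mul_left _
  refine hmajorant.of_nonneg_of_le (fun _ => norm_nonneg _) fun ⟨n, p⟩ => ?_
  simp only [norm_mul, norm_div, norm_pow, norm_natCast]
  calc ‖f (n + p)‖ * (‖t₁‖ ^ n / n.factorial) * (‖t₂‖ ^ p / p.factorial)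
      ≤ |K| * |r| ^ (n + p) * (‖t₁‖ ^ n / n.factorial) * (‖t₂‖ ^ p / p.factorial) := by
        gcongr; exact hf' _
    _ = _ := by rw [mul_pow, mul_pow, pow_add]; ring

lemma tsum_mul_add_pow_div_factorial (hf : ∀ k, ‖f k‖ ≤ K * r ^ k) (t₁ t₂ : ℂ) :
    ∑' k, f k * ((t₁ + t₂) ^ k / k.factorial) =
      ∑' q : ℕ × ℕ, f (q.1 + q.2) * (t₁ ^ q.1 / q.1.factorial) * (t₂ ^ q.2 / q.2.factorial) := by
  rw [tsum_prod_eq_tsum_sum_antidiagonal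
    (summable_norm_mul_pow_div_factorial_mul hf t₁ t₂).of_norm]
  refine tsum_congr fun n => ?_
  rw [(Commute.all t₁ t₂).add_pow', Finset.sum_div, Finset.mul_sum]
  refine Finset.sum_congr rfl fun q hq => ?_
  rw [Finset.HasAntidiagonal.mem_antidiagonal] at hq
  subst hq
  have : ((q.1 + q.2).factorial : ℂ) ≠ 0 := mod_cast (q.1 + q.2).factorial_ne_zero
  rw [nsmul_eq_mul, Nat.cast_add_choose]
  field_simp

end ExponentialType

lemma hyp1F1_add (a c : ℂ) (t₁ t₂ : ℝ) :
    hyp1F1 a c (t₁ + t₂) = ∑' q : ℕ × ℕ, poch a (q.1 + q.2) / poch c (q.1 + q.2) *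
      ((t₁ : ℂ) ^ q.1 / q.1.factorial) * ((t₂ : ℂ) ^ q.2 / q.2.factorial) := by
  obtain ⟨K, -, hK⟩ := exists_norm_poch_div_le a c
  simp only [hyp1F1, mul_div_mul_comm, ofReal_add]
  exact tsum_mul_add_pow_div_factorial hK _ _

lemma summable_norm_hyp0F1_term (c : ℂ) (t : ℝ) :
    Summable fun k : ℕ => ‖(t : ℂ) ^ k / (poch c k * k.factorial)‖ := by
  obtain ⟨K, -, hK⟩ := exists_norm_inv_poch_le c
  refine ((Real.summable_pow_div_factorial (2 * |t|)).mul_left K).of_nonneg_of_le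
    (fun _ => norm_nonneg _) fun k => ?_
  rw [show (t : ℂ) ^ k / (poch c k * k.factorial) = (poch c k)⁻¹ * ((t : ℂ) ^ k / k.factorial) by
    ring, norm_mul, norm_div, norm_pow, norm_real, Real.norm_eq_abs, norm_natCast]
  calc ‖(poch c k)⁻¹‖ * (|t| ^ k / k.factorial) ≤ ‖(poch c k)⁻¹‖ * |t| ^ k := by
        gcongr; exact div_le_self (by positivity) (by exact_mod_cast k.factorial_pos)
    _ ≤ K * 2 ^ k / k.factorial * |t| ^ k := by gcongr; exact hK k
    _ = K * ((2 * |t|) ^ k / k.factorial) := by ring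

/-- The general term of the Cauchy product `₀F₁(γ₁; x) ₁F₁(β₂; γ₂; y + z)`, after expanding
`(y + z)^k` binomially; its index `(m, n, p)` matches that of `H_A`. -/
noncomputable def haTerm (β₂ γ₁ γ₂ x y z : ℂ) (q : ℕ × ℕ × ℕ) : ℂ :=
  x ^ q.1 / (poch γ₁ q.1 * q.1.factorial) *
    (poch β₂ (q.2.1 + q.2.2) / poch γ₂ (q.2.1 + q.2.2) *
      (y ^ q.2.1 / q.2.1.factorial) * (z ^ q.2.2 / q.2.2.factorial))

lemma hyp0F1_mul_hyp1F1_add (β₂ γ₁ γ₂ : ℂ) (x y z : ℝ) :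
    hyp0F1 γ₁ x * hyp1F1 β₂ γ₂ (y + z) = ∑' q, haTerm β₂ γ₁ γ₂ x y z q := by
  obtain ⟨K, -, hK⟩ := exists_norm_poch_div_le β₂ γ₂
  rw [hyp1F1_add, hyp0F1, tsum_mul_tsum_of_summable_norm (summable_norm_hyp0F1_term γ₁ x)
    (summable_norm_mul_pow_div_factorial_mul hK _ _)]
  rfl

lemma haTerm_mul (β₂ γ₁ γ₂ x y z u v : ℂ) (q : ℕ × ℕ × ℕ) :
    haTerm β₂ γ₁ γ₂ (x * u * v) (y * v) (z * u) q =
      haTerm β₂ γ₁ γ₂ x y z q * u ^ (q.1 + q.2.2) * v ^ (q.1 + q.2.1) := by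
  simp only [haTerm, mul_pow, pow_add]
  ring

lemma srivastavaHA_eq_tsum {α β₁ β₂ γ₁ γ₂ : ℂ} {x y z : ℝ}
    (h : Summable fun q : ℕ × ℕ × ℕ =>
      poch α (q.1 + q.2.2) * poch β₁ (q.1 + q.2.1) * haTerm β₂ γ₁ γ₂ x y z q) :
    srivastavaHA α β₁ β₂ γ₁ γ₂ x y z =
      ∑' q, poch α (q.1 + q.2.2) * poch β₁ (q.1 + q.2.1) * haTerm β₂ γ₁ γ₂ x y z q := by
  rw [h.tsum_prod, srivastavaHA]
  refine tsum_congr fun m => ?_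
  rw [(h.prod_factor m).tsum_prod]
  refine tsum_congr fun n => tsum_congr fun p => ?_
  simp only [haTerm]
  ring

lemma factorial_add_le_two_pow_mul (m n : ℕ) :
    ((m + n).factorial : ℝ) ≤ 2 ^ (m + n) * m.factorial * n.factorial := by
  rw [← Nat.add_choose_mul_factorial_mul_factorial m n]
  push_cast
  gcongr
  exact_mod_cast Nat.choose_le_two_pow _ _

lemma summable_mul_mul_of_nonneg {f g h : ℕ → ℝ} (hf : Summable f) (hg : Summable g)
    (hh : Summable h) (hf0 : 0 ≤ f) (hg0 : 0 ≤ g) (hh0 : 0 ≤ h) :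
    Summable fun q : ℕ × ℕ × ℕ => f q.1 * (g q.2.1 * h q.2.2) :=
  hf.mul_of_nonneg (hg.mul_of_nonneg hh hg0 hh0) hf0 fun _ => mul_nonneg (hg0 _) (hh0 _)

section Estimates

variable (β₂ γ₁ γ₂ : ℂ) {a b : ℝ}

lemma exists_norm_haTerm_mul_Gamma_le (x y z : ℂ) (hb : 0 < b) :
    ∃ K ≥ 0, ∀ m n p : ℕ, ‖haTerm β₂ γ₁ γ₂ x y z (m, n, p)‖ * Real.Gamma (b + ↑(m + n)) ≤
      K * ((8 * ‖x‖) ^ m / m.factorial * ((8 * ‖y‖) ^ n * ((2 * ‖z‖) ^ p / p.factorial))) := by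
  obtain ⟨K₁, hK₁, h₁⟩ := exists_norm_inv_poch_le γ₁
  obtain ⟨K₂, hK₂, h₂⟩ := exists_norm_poch_div_le β₂ γ₂
  obtain ⟨K₃, hK₃, h₃⟩ := exists_Real_Gamma_add_nat_le hb
  refine ⟨K₁ * K₂ * K₃, by positivity, fun m n p => ?_⟩
  rw [haTerm, show x ^ m / (poch γ₁ m * m.factorial) = (poch γ₁ m)⁻¹ * (x ^ m / m.factorial) by
    ring]
  simp only [norm_mul, norm_div, norm_pow, norm_natCast]
  calc ‖(poch γ₁ m)⁻¹‖ * (‖x‖ ^ m / m.factorial) * (‖poch β₂ (n + p)‖ / ‖poch γ₂ (n + p)‖ *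
          (‖y‖ ^ n / n.factorial) * (‖z‖ ^ p / p.factorial)) * Real.Gamma (b + ↑(m + n))
      ≤ K₁ * 2 ^ m / m.factorial * (‖x‖ ^ m / m.factorial) * (K₂ * 2 ^ (n + p) *
          (‖y‖ ^ n / n.factorial) * (‖z‖ ^ p / p.factorial)) *
          (K₃ * 2 ^ (m + n) * (2 ^ (m + n) * m.factorial * n.factorial)) := by
        gcongr
        · exact h₁ m
        · simpa only [norm_div] using h₂ (n + p)
        · exact (h₃ _).trans (by gcongr; exact factorial_add_le_two_pow_mul m n)
    _ = _ := by
        have : (m.factorial : ℝ) ≠ 0 := by positivity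
        have : (n.factorial : ℝ) ≠ 0 := by positivity
        rw [show (8 : ℝ) = 2 * 2 * 2 by norm_num]
        simp only [mul_pow, pow_add]
        field_simp

lemma summable_norm_haTerm_mul_Gamma (x : ℂ) {y : ℂ} (z : ℂ) (hy : ‖y‖ < 1 / 8) (hb : 0 < b) :
    Summable fun q : ℕ × ℕ × ℕ =>
      ‖haTerm β₂ γ₁ γ₂ x y z q‖ * Real.Gamma (b + ↑(q.1 + q.2.1)) := by
  obtain ⟨K, -, hK⟩ := exists_norm_haTerm_mul_Gamma_le β₂ γ₁ γ₂ x y z hb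
  have hmajorant := summable_mul_mul_of_nonneg (Real.summable_pow_div_factorial (8 * ‖x‖))
    (summable_geometric_of_lt_one (by positivity : 0 ≤ 8 * ‖y‖) (by linarith))
    (Real.summable_pow_div_factorial (2 * ‖z‖)) (fun _ => by positivity) (fun _ => by positivity)
    (fun _ => by positivity)
  exact (hmajorant.mul_left K).of_nonneg_of_le (fun q => mul_nonneg (norm_nonneg _)
    (Real.Gamma_pos_of_pos (by positivity)).le) (fun q => hK q.1 q.2.1 q.2.2)

lemma summable_norm_haTerm_mul_Gamma_mul_Gamma {x y z : ℂ} (hx : ‖x‖ < 1 / 32) (hy : ‖y‖ < 1 / 8)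
    (hz : ‖z‖ < 1 / 8) (ha : 0 < a) (hb : 0 < b) :
    Summable fun q : ℕ × ℕ × ℕ => ‖haTerm β₂ γ₁ γ₂ x y z q‖ *
      Real.Gamma (b + ↑(q.1 + q.2.1)) * Real.Gamma (a + ↑(q.1 + q.2.2)) := by
  obtain ⟨K, hK0, hK⟩ := exists_norm_haTerm_mul_Gamma_le β₂ γ₁ γ₂ x y z hb
  obtain ⟨K', hK', h'⟩ := exists_Real_Gamma_add_nat_le ha
  have hmajorant := summable_mul_mul_of_nonneg
    (summable_geometric_of_lt_one (by positivity : 0 ≤ 32 * ‖x‖) (by linarith))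
    (summable_geometric_of_lt_one (by positivity : 0 ≤ 8 * ‖y‖) (by linarith))
    (summable_geometric_of_lt_one (by positivity : 0 ≤ 8 * ‖z‖) (by linarith))
    (fun _ => by positivity) (fun _ => by positivity) (fun _ => by positivity)
  refine Summable.of_nonneg_of_le (fun q => ?_) (fun ⟨m, n, p⟩ => ?_) (hmajorant.mul_left (K * K'))
  · have := Real.Gamma_pos_of_pos (by positivity : 0 < b + ↑(q.1 + q.2.1))
    have := Real.Gamma_pos_of_pos (by positivity : 0 < a + ↑(q.1 + q.2.2))
    positivity
  calc ‖haTerm β₂ γ₁ γ₂ x y z (m, n, p)‖ * Real.Gamma (b + ↑(m + n)) * Real.Gamma (a + ↑(m + p))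
      ≤ K * ((8 * ‖x‖) ^ m / m.factorial * ((8 * ‖y‖) ^ n * ((2 * ‖z‖) ^ p / p.factorial))) *
          (K' * 2 ^ (m + p) * (2 ^ (m + p) * m.factorial * p.factorial)) := by
        refine mul_le_mul (hK m n p) ((h' _).trans ?_)
          (Real.Gamma_pos_of_pos (by positivity)).le (by positivity)
        gcongr
        exact factorial_add_le_two_pow_mul m p
    _ = _ := by
        have : (m.factorial : ℝ) ≠ 0 := by positivity
        have : (p.factorial : ℝ) ≠ 0 := by positivity
        rw [show (8 : ℝ) = 2 * 2 * 2 by norm_num, show (32 : ℝ) = 2 * 2 * 2 * 2 * 2 by norm_num]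
        simp only [mul_pow, pow_add]
        field_simp

end Estimates

noncomputable def haIntegrand (α β₁ β₂ γ₁ γ₂ : ℂ) (x y z u₁ u₂ : ℝ) : ℂ :=
  (Real.exp (-u₁ - u₂) : ℂ) * (u₁ : ℂ) ^ (α - 1) * (u₂ : ℂ) ^ (β₁ - 1) *
    hyp0F1 γ₁ (x * u₁ * u₂) * hyp1F1 β₂ γ₂ (y * u₂ + z * u₁)

section Integrals

variable {α β₁ β₂ γ₁ γ₂ : ℂ} {x y z : ℝ}

lemma haIntegrand_eq_tsum {u₁ u₂ : ℝ} (hu₁ : 0 < u₁) (hu₂ : 0 < u₂) :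
    haIntegrand α β₁ β₂ γ₁ γ₂ x y z u₁ u₂ = ∑' q : ℕ × ℕ × ℕ, haTerm β₂ γ₁ γ₂ x y z q *
      gammaIntegrand (α + ↑(q.1 + q.2.2)) u₁ * gammaIntegrand (β₁ + ↑(q.1 + q.2.1)) u₂ := by
  rw [haIntegrand, mul_assoc, hyp0F1_mul_hyp1F1_add, ← tsum_mul_left]
  refine tsum_congr fun q => ?_
  simp only [ofReal_mul]
  rw [haTerm_mul, gammaIntegrand_add_nat hu₁, gammaIntegrand_add_nat hu₂, gammaIntegrand,
    gammaIntegrand, sub_eq_add_neg, Real.exp_add, ofReal_mul]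
  ring

lemma integral_haIntegrand_right (hβ₁ : 0 < β₁.re) (hy : |y| < 1 / 8) {u₁ : ℝ}
    (hu₁ : 0 < u₁) :
    ∫ u₂ in Set.Ioi (0 : ℝ), haIntegrand α β₁ β₂ γ₁ γ₂ x y z u₁ u₂ =
      ∑' q : ℕ × ℕ × ℕ, haTerm β₂ γ₁ γ₂ x y z q * Gamma (β₁ + ↑(q.1 + q.2.1)) *
        gammaIntegrand (α + ↑(q.1 + q.2.2)) u₁ := by
  have hsum := (summable_norm_haTerm_mul_Gamma β₂ γ₁ γ₂ (x * u₁) (y := y) (z * u₁)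
    (by simpa using hy) hβ₁).mul_left ‖gammaIntegrand α u₁‖
  rw [setIntegral_congr_fun measurableSet_Ioi fun u₂ hu₂ => haIntegrand_eq_tsum hu₁ hu₂,
    integral_tsum_mul_gammaIntegrand (fun q => add_natCast_re_pos hβ₁ _) (hsum.congr fun q => ?_)]
  · exact tsum_congr fun q => mul_right_comm _ _ _
  have hscale := haTerm_mul β₂ γ₁ γ₂ x y z u₁ 1 q
  simp only [mul_one, one_pow] at hscale
  rw [hscale, gammaIntegrand_add_nat hu₁, add_re, natCast_re]
  simp only [norm_mul, norm_pow, norm_real, Real.norm_of_nonneg hu₁.le]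
  ring

lemma summable_poch_mul_poch_mul_haTerm (hα : 0 < α.re) (hβ₁ : 0 < β₁.re) (hx : |x| < 1 / 32)
    (hy : |y| < 1 / 8) (hz : |z| < 1 / 8) :
    Summable fun q : ℕ × ℕ × ℕ =>
      poch α (q.1 + q.2.2) * poch β₁ (q.1 + q.2.1) * haTerm β₂ γ₁ γ₂ x y z q := by
  have hΓ : 0 < ‖Gamma α‖ * ‖Gamma β₁‖ := by
    have := Gamma_ne_zero_of_re_pos hα
    have := Gamma_ne_zero_of_re_pos hβ₁
    positivity
  have hsum := summable_norm_haTerm_mul_Gamma_mul_Gamma β₂ γ₁ γ₂ (x := x) (y := y) (z := z)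
    (by simpa using hx) (by simpa using hy) (by simpa using hz) hα hβ₁
  refine Summable.of_norm <| (hsum.div_const (‖Gamma α‖ * ‖Gamma β₁‖)).of_nonneg_of_le
    (fun _ => norm_nonneg _) fun q => ?_
  rw [le_div_iff₀ hΓ]
  calc ‖poch α (q.1 + q.2.2) * poch β₁ (q.1 + q.2.1) * haTerm β₂ γ₁ γ₂ x y z q‖ *
        (‖Gamma α‖ * ‖Gamma β₁‖)
      = ‖haTerm β₂ γ₁ γ₂ x y z q‖ * ‖Gamma (β₁ + ↑(q.1 + q.2.1))‖ *
          ‖Gamma (α + ↑(q.1 + q.2.2))‖ := by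
        rw [Gamma_add_nat_eq_poch_mul (ne_neg_natCast_of_re_pos hα),
          Gamma_add_nat_eq_poch_mul (ne_neg_natCast_of_re_pos hβ₁)]
        simp only [norm_mul]
        ring
    _ ≤ _ := by gcongr <;> exact norm_Gamma_add_nat_le ‹_› _

lemma integral_integral_haIntegrand (hα : 0 < α.re) (hβ₁ : 0 < β₁.re) (hx : |x| < 1 / 32)
    (hy : |y| < 1 / 8) (hz : |z| < 1 / 8) :
    ∫ u₁ in Set.Ioi (0 : ℝ), ∫ u₂ in Set.Ioi (0 : ℝ), haIntegrand α β₁ β₂ γ₁ γ₂ x y z u₁ u₂ =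
      ∑' q : ℕ × ℕ × ℕ, haTerm β₂ γ₁ γ₂ x y z q * Gamma (β₁ + ↑(q.1 + q.2.1)) *
        Gamma (α + ↑(q.1 + q.2.2)) := by
  have hsum := summable_norm_haTerm_mul_Gamma_mul_Gamma β₂ γ₁ γ₂ (x := x) (y := y) (z := z)
    (by simpa using hx) (by simpa using hy) (by simpa using hz) hα hβ₁
  rw [setIntegral_congr_fun measurableSet_Ioi fun u₁ hu₁ => integral_haIntegrand_right hβ₁ hy hu₁]
  refine integral_tsum_mul_gammaIntegrand (fun q => add_natCast_re_pos hα _)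
    (hsum.of_nonneg_of_le (fun q => mul_nonneg (norm_nonneg _)
      (Real.Gamma_pos_of_pos (add_natCast_re_pos hα _)).le) fun q => ?_)
  rw [norm_mul, add_re, natCast_re]
  gcongr
  exact norm_Gamma_add_nat_le hβ₁ _

end Integrals

/-- Integral representation (6.5) for `H_A`, valid for `x, y, z` sufficiently small. -/
theorem srivastavaHA_integral (α β₁ β₂ γ₁ γ₂ : ℂ)
    (hα : 0 < α.re) (hβ₁ : 0 < β₁.re) :
    ∃ ε > (0:ℝ), ∀ x y z : ℝ, |x| < ε → |y| < ε → |z| < ε →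
      srivastavaHA α β₁ β₂ γ₁ γ₂ x y z =
        (1 / (Complex.Gamma α * Complex.Gamma β₁)) *
          ∫ u₁ in Set.Ioi (0:ℝ), ∫ u₂ in Set.Ioi (0:ℝ),
            (Real.exp (-u₁ - u₂) : ℂ) * (u₁ : ℂ) ^ (α - 1) * (u₂ : ℂ) ^ (β₁ - 1) *
              hyp0F1 γ₁ (x * u₁ * u₂) * hyp1F1 β₂ γ₂ (y * u₂ + z * u₁) := by
  refine ⟨1 / 32, by norm_num, fun x y z hx hy hz => ?_⟩
  have hy' : |y| < 1 / 8 := hy.trans (by norm_num)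
  have hz' : |z| < 1 / 8 := hz.trans (by norm_num)
  have hΓα := Gamma_ne_zero_of_re_pos hα
  have hΓβ₁ := Gamma_ne_zero_of_re_pos hβ₁
  have hterm (q : ℕ × ℕ × ℕ) :
      haTerm β₂ γ₁ γ₂ x y z q * Gamma (β₁ + ↑(q.1 + q.2.1)) * Gamma (α + ↑(q.1 + q.2.2)) =
        poch α (q.1 + q.2.2) * poch β₁ (q.1 + q.2.1) * haTerm β₂ γ₁ γ₂ x y z q *
          (Gamma α * Gamma β₁) := by
    rw [Gamma_add_nat_eq_poch_mul (ne_neg_natCast_of_re_pos hα),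
      Gamma_add_nat_eq_poch_mul (ne_neg_natCast_of_re_pos hβ₁)]
    ring
  change _ = _ * ∫ u₁ in Set.Ioi (0 : ℝ), ∫ u₂ in Set.Ioi (0 : ℝ),
    haIntegrand α β₁ β₂ γ₁ γ₂ x y z u₁ u₂
  rw [integral_integral_haIntegrand hα hβ₁ hx hy' hz', tsum_congr hterm, tsum_mul_right,
    srivastavaHA_eq_tsum (summable_poch_mul_poch_mul_haTerm hα hβ₁ hx hy' hz')]
  field_simp
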